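/- arXiv:1612.00630 — 4 statements merged into one kernel-verified Lean document; each statement's English description precedes it below -/
import Mathlib

section
/- Let (X,d) be a complete metric space and {T_i}_{i∈ℕ} a sequence of maps T_i : X → X with a compact invariant set C ⊆ X (T_i(C) ⊆ C for all i). Assume {T_i} converges uniformly on C to a map T : X → X that is Lipschitz with constant μ < 1. Then for any x ∈ C the forward trajectory Φ_k(x) = T_k ∘ T_{k−1} ∘ ⋯ ∘ T_1(x) converges to the unique fixed point p of T: lim_{k→∞} d(Φ_k(x), p) = 0. -/
open Filter Topology

/-- The forward trajectory maps `Φ_k = T_k ∘ T_{k-1} ∘ ⋯ ∘ T₁` (with `0`-based indexing: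
`Φ_k = T (k-1) ∘ ⋯ ∘ T 1 ∘ T 0`). -/
def forwardTraj {α : Type*} (T : ℕ → α → α) : ℕ → α → α
  | 0 => id
  | k + 1 => T k ∘ forwardTraj T k

/-- (Proposition `forwardconvergence`, convergence of forward trajectories): if the maps
`{Tᵢ}` have a compact invariant set `C` and converge uniformly on `C` to a Lipschitz map
`T` with constant `μ < 1`, then for every `x ∈ C` the forward trajectory `Φ_k(x)`
converges to the unique fixed point of `T`. -/
theorem forwardTraj_tendsto_fixedPoint
    {X : Type*} [MetricSpace X] [CompleteSpace X] (T : ℕ → X → X)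
    (C : Set X) (hCc : IsCompact C) (hinv : ∀ i : ℕ, Set.MapsTo (T i) C C)
    (Tl : X → X) (μ : NNReal) (hμ : μ < 1) (hTl : LipschitzWith μ Tl)
    (hu : TendstoUniformlyOn (fun i x => T i x) Tl atTop C) :
    ∀ x ∈ C, ∃ p : X, Tl p = p ∧ (∀ q, Tl q = q → q = p) ∧
      Tendsto (fun k => forwardTraj T k x) atTop (𝓝 p) := by
  intro x hx
  haveI : Nonempty X := ⟨x⟩
  have hc : ContractingWith μ Tl := ⟨hμ, hTl⟩
  refine ⟨hc.fixedPoint, hc.fixedPoint_isFixedPt, fun q hq => hc.fixedPoint_unique hq, ?_⟩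
  set p := hc.fixedPoint with hp
  have hpfix : Tl p = p := hc.fixedPoint_isFixedPt
  have hmem : ∀ k, forwardTraj T k x ∈ C := by
    intro k
    induction k with
    | zero => exact hx
    | succ k ih => exact hinv k ih
  have hμ1 : (μ : ℝ) < 1 := hμ
  have hμ0 : (0 : ℝ) ≤ μ := μ.coe_nonneg
  rw [Metric.tendsto_atTop]
  intro ε hε
  set c : ℝ := (1 - (μ : ℝ)) * ε / 2 with hcdef
  have hcpos : 0 < c := by
    have : (0:ℝ) < 1 - μ := by linarith
    positivity
  obtain ⟨N, hN⟩ := eventually_atTop.mp (Metric.tendstoUniformlyOn_iff.mp hu c hcpos)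
  -- hN : ∀ n ≥ N, ∀ y ∈ C, dist (Tl y) (T n y) < c
  have key : ∀ m : ℕ,
      dist (forwardTraj T (N + m) x) p ≤ (μ:ℝ)^m * dist (forwardTraj T N x) p + ε / 2 := by
    intro m
    induction m with
    | zero => simpa using le_of_lt (half_pos hε)
    | succ m ih =>
      have hy := hmem (N + m)
      have h1 : dist (forwardTraj T (N + (m+1)) x) p
          ≤ dist (T (N + m) (forwardTraj T (N + m) x)) (Tl (forwardTraj T (N + m) x))
            + dist (Tl (forwardTraj T (N + m) x)) p := by
        have : forwardTraj T (N + (m+1)) x = T (N + m) (forwardTraj T (N + m) x) := rfl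
        rw [this]
        exact dist_triangle _ _ _
      have h2 : dist (T (N + m) (forwardTraj T (N + m) x)) (Tl (forwardTraj T (N + m) x)) < c := by
        rw [dist_comm]
        exact hN (N + m) (Nat.le_add_right _ _) _ hy
      have h3 : dist (Tl (forwardTraj T (N + m) x)) p ≤ (μ:ℝ) * dist (forwardTraj T (N + m) x) p := by
        calc dist (Tl (forwardTraj T (N + m) x)) p
            = dist (Tl (forwardTraj T (N + m) x)) (Tl p) := by rw [hpfix]
          _ ≤ (μ:ℝ) * dist (forwardTraj T (N + m) x) p := hTl.dist_le_mul _ _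
      have hd0 : 0 ≤ dist (forwardTraj T (N + m) x) p := dist_nonneg
      have := mul_le_mul_of_nonneg_left ih hμ0
      have hcle : c + (μ:ℝ) * (ε / 2) ≤ ε / 2 := by
        rw [hcdef]; nlinarith
      calc dist (forwardTraj T (N + (m+1)) x) p
          ≤ c + (μ:ℝ) * dist (forwardTraj T (N + m) x) p := by linarith
        _ ≤ c + (μ:ℝ) * ((μ:ℝ)^m * dist (forwardTraj T N x) p + ε / 2) := by linarith
        _ = (μ:ℝ)^(m+1) * dist (forwardTraj T N x) p + (c + (μ:ℝ) * (ε / 2)) := by ring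
        _ ≤ (μ:ℝ)^(m+1) * dist (forwardTraj T N x) p + ε / 2 := by linarith
  -- choose m large enough
  have hpow : Tendsto (fun m : ℕ => (μ:ℝ)^m * dist (forwardTraj T N x) p) atTop (𝓝 0) := by
    have := tendsto_pow_atTop_nhds_zero_of_lt_one hμ0 hμ1
    simpa using this.mul_const (dist (forwardTraj T N x) p)
  obtain ⟨M, hM⟩ := eventually_atTop.mp
    (hpow.eventually (eventually_lt_nhds (show (0:ℝ) < ε/2 by linarith)))
  refine ⟨N + M, fun n hn => ?_⟩
  have hmge : M ≤ n - N := by omega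
  have hn' : n = N + (n - N) := by omega
  have h1 := key (n - N)
  have h2 := hM (n - N) hmge
  rw [← hn'] at h1
  calc dist (forwardTraj T n x) p
      ≤ (μ:ℝ)^(n - N) * dist (forwardTraj T N x) p + ε / 2 := h1
    _ < ε / 2 + ε / 2 := by linarith
    _ = ε := by ring
end

section
/- Let (X,d) be a metric space, {T_i}_{i∈ℕ} a sequence of maps T_i : X → X with an invariant set C ⊆ X (T_i(C) ⊆ C for all i), and T : X → X a Lipschitz map with constant μ < 1 satisfying T(C) ⊆ C. Set ε_i = sup_{y∈C} d(T_i(y), T(y)). Then for every x ∈ C and all k, m ∈ ℕ, d(Φ_{k+m}(x), T^m(Φ_k(x))) ≤ (max_{1≤i≤m} ε_{k+i}) / (1−μ), where Φ_j = T_j ∘ T_{j−1} ∘ ⋯ ∘ T_1 and T^m is the m-fold composition of T. -/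
open Filter Topology

/-- (Key estimate in the proof of Proposition `forwardconvergence`): with
`εᵢ = sup_{y ∈ C} d(Tᵢ(y), T(y))`, for `x ∈ C` one has
`d(Φ_{k+m}(x), T^m(Φ_k(x))) ≤ (max_{1 ≤ i ≤ m} ε_{k+i}) / (1 - μ)`. -/
theorem forwardTraj_dist_iterate_le
    {X : Type*} [MetricSpace X] (T : ℕ → X → X)
    (C : Set X) (hinv : ∀ i : ℕ, Set.MapsTo (T i) C C)
    (Tl : X → X) (μ : NNReal) (hμ : μ < 1) (hTl : LipschitzWith μ Tl)
    (hTlC : Set.MapsTo Tl C C)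
    (ε : ℕ → ℝ) (hε : ∀ i : ℕ, IsLUB ((fun y => dist (T i y) (Tl y)) '' C) (ε i))
    (x : X) (hx : x ∈ C) (k m : ℕ) (hm : 0 < m) :
    dist (forwardTraj T (k + m) x) (Tl^[m] (forwardTraj T k x)) ≤
      ((Finset.range m).sup' (Finset.nonempty_range_iff.mpr hm.ne') fun i => ε (k + i)) /
        (1 - (μ : ℝ)) := by
  have hμ1 : (μ : ℝ) < 1 := by exact_mod_cast hμ
  have hpos : (0 : ℝ) < 1 - (μ : ℝ) := by linarith
  have hmemC : ∀ j : ℕ, forwardTraj T j x ∈ C := by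
    intro j
    induction j with
    | zero => exact hx
    | succ n ih => exact hinv n ih
  have hεub : ∀ j : ℕ, ∀ y ∈ C, dist (T j y) (Tl y) ≤ ε j := fun j y hy =>
    (hε j).1 ⟨y, hy, rfl⟩
  have hεnn : ∀ j : ℕ, 0 ≤ ε j := fun j =>
    le_trans dist_nonneg (hεub j x hx)
  induction m with
  | zero => omega
  | succ n ih =>
    have hne : (Finset.range (n + 1)).Nonempty := Finset.nonempty_range_iff.mpr n.succ_ne_zero
    set E : ℝ := (Finset.range (n + 1)).sup' hne fun i => ε (k + i) with hE
    have hEge : ε (k + n) ≤ E := Finset.le_sup' (fun i => ε (k + i)) (Finset.self_mem_range_succ n)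
    have hEnn : 0 ≤ E := le_trans (hεnn (k + n)) hEge
    -- D bound
    have hD : dist (forwardTraj T (k + n) x) (Tl^[n] (forwardTraj T k x)) ≤ E / (1 - μ) := by
      rcases Nat.eq_zero_or_pos n with hn0 | hn
      · subst hn0
        simp only [Nat.add_zero, Function.iterate_zero, id_eq, dist_self]
        positivity
      · have hnne : (Finset.range n).Nonempty := Finset.nonempty_range_iff.mpr hn.ne'
        refine le_trans (ih hn) ?_
        gcongr
        exact Finset.sup'_mono _ (Finset.range_subset_range.mpr n.le_succ) hnne
    have step : dist (forwardTraj T (k + (n + 1)) x) (Tl^[n + 1] (forwardTraj T k x)) ≤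
        ε (k + n) + (μ : ℝ) * dist (forwardTraj T (k + n) x) (Tl^[n] (forwardTraj T k x)) := by
      have h1 : forwardTraj T (k + (n + 1)) x = T (k + n) (forwardTraj T (k + n) x) := rfl
      rw [h1, Function.iterate_succ_apply']
      calc dist (T (k + n) (forwardTraj T (k + n) x)) (Tl (Tl^[n] (forwardTraj T k x)))
          ≤ dist (T (k + n) (forwardTraj T (k + n) x)) (Tl (forwardTraj T (k + n) x)) +
            dist (Tl (forwardTraj T (k + n) x)) (Tl (Tl^[n] (forwardTraj T k x))) :=
          dist_triangle _ _ _
        _ ≤ ε (k + n) + (μ : ℝ) * dist (forwardTraj T (k + n) x) (Tl^[n] (forwardTraj T k x)) := by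
            gcongr
            · exact hεub (k + n) _ (hmemC (k + n))
            · exact hTl.dist_le_mul _ _
    have hμnn : (0 : ℝ) ≤ μ := μ.coe_nonneg
    have : dist (forwardTraj T (k + (n + 1)) x) (Tl^[n + 1] (forwardTraj T k x)) ≤
        E + (μ : ℝ) * (E / (1 - μ)) := by
      refine le_trans step ?_
      gcongr
    refine le_trans this ?_
    rw [le_div_iff₀ hpos]
    have hEdiv : ((μ : ℝ) * (E / (1 - μ))) * (1 - μ) = (μ : ℝ) * E := by
      field_simp
    nlinarith
end

section
/- Let (X,d) be a complete metric space and for each i ∈ ℕ let 𝓕_i = {f_{1,i},…,f_{n_i,i}} be a finite family of Lipschitz maps on X, with Hutchinson operators F_i(A) = ⋃_{r=1}^{n_i} f_{r,i}(A) acting on the space H(X) of nonempty compact subsets of X with the Hausdorff metric h. Let L_i = max_{1≤r≤n_i} Lip(f_{r,i}). If lim_{k→∞} ∏_{i=1}^k L_i = 0, then for all nonempty compact sets A, B ⊆ X, h(Φ_k(A), Φ_k(B)) → 0 and h(Ψ_k(A), Ψ_k(B)) → 0 as k → ∞, where Φ_k = F_k ∘ F_{k−1} ∘ ⋯ ∘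 F_1 and Ψ_k = F_1 ∘ F_2 ∘ ⋯ ∘ F_k. -/
open Filter Topology TopologicalSpace

/-- The backward trajectory maps `Ψ_k = F₁ ∘ F₂ ∘ ⋯ ∘ F_k` (with `0`-based indexing). -/
def backwardTraj {α : Type*} (T : ℕ → α → α) : ℕ → α → α
  | 0 => id
  | k + 1 => backwardTraj T k ∘ T k

/-!
Each Hutchinson operator `Fᵢ` is `Lᵢ`-Lipschitz for the Hausdorff metric, since a `K`-Lipschitz
map multiplies the Hausdorff distance of nonempty sets by at most `K` and a union of images is
no farther from another union than the farthest pair of corresponding images. Hence `Φ_k` and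
`Ψ_k`, compositions of `k` such operators in either order, are `∏_{i<k} Lᵢ`-Lipschitz, and the
distance between the trajectories of `A` and `B` is at most `(∏_{i<k} Lᵢ) · h(A, B) → 0`.
-/

open Metric NNReal

section Hausdorff

variable {α β : Type*} [PseudoEMetricSpace α] [PseudoEMetricSpace β] {K : ℝ≥0} {f : α → β}

-- Nonemptiness is needed only for `K = 0`: `infEDist x ∅ = ∞` but `0 * ∞ = 0`.
theorem LipschitzWith.infEDist_image_le (hf : LipschitzWith K f) {t : Set α} (ht : t.Nonempty)
    (x : α) : infEDist (f x) (f '' t) ≤ K * infEDist x t := by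
  have : Nonempty t := ht.to_subtype
  calc infEDist (f x) (f '' t) ≤ ⨅ y : t, K * edist x y :=
        le_iInf fun y => (infEDist_le_edist_of_mem (Set.mem_image_of_mem f y.2)).trans (hf x y)
    _ = K * infEDist x t := by rw [← ENNReal.mul_iInf (by simp), infEDist, iInf_subtype']

theorem LipschitzWith.hausdorffEDist_image_le (hf : LipschitzWith K f) {s t : Set α}
    (hs : s.Nonempty) (ht : t.Nonempty) :
    hausdorffEDist (f '' s) (f '' t) ≤ K * hausdorffEDist s t := by
  refine hausdorffEDist_le_of_infEDist ?_ ?_ <;> rintro _ ⟨x, hx, rfl⟩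
  · exact (hf.infEDist_image_le ht x).trans <|
      mul_le_mul_right (infEDist_le_hausdorffEDist_of_mem hx) _
  · exact (hf.infEDist_image_le hs x).trans <| mul_le_mul_right
      ((infEDist_le_hausdorffEDist_of_mem hx).trans_eq hausdorffEDist_comm) _

theorem hausdorffEDist_iUnion_image_le {ι : Sort*} {g : ι → α → β}
    (hg : ∀ r, LipschitzWith K (g r)) {s t : Set α} (hs : s.Nonempty) (ht : t.Nonempty) :
    hausdorffEDist (⋃ r, g r '' s) (⋃ r, g r '' t) ≤ K * hausdorffEDist s t :=
  hausdorffEDist_iUnion_le.trans <| iSup_le fun r => (hg r).hausdorffEDist_image_le hs ht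

end Hausdorff

theorem NonemptyCompacts.lipschitzWith_of_coe_eq_iUnion_image {X ι : Type*} [EMetricSpace X]
    {K : ℝ≥0} {g : ι → X → X} (hg : ∀ r, LipschitzWith K (g r))
    {F : NonemptyCompacts X → NonemptyCompacts X}
    (hF : ∀ B : NonemptyCompacts X, (F B : Set X) = ⋃ r, g r '' (B : Set X)) :
    LipschitzWith K F := fun A B => by
  change hausdorffEDist (F A : Set X) (F B) ≤ K * hausdorffEDist (A : Set X) B
  rw [hF, hF]
  exact hausdorffEDist_iUnion_image_le hg A.nonempty B.nonempty

section Trajectories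

variable {α : Type*} [PseudoEMetricSpace α] {T : ℕ → α → α} {K : ℕ → ℝ≥0}

theorem lipschitzWith_forwardTraj (hT : ∀ i, LipschitzWith (K i) (T i)) (k : ℕ) :
    LipschitzWith (∏ i ∈ Finset.range k, K i) (forwardTraj T k) := by
  induction k with
  | zero => exact LipschitzWith.id
  | succ k ih =>
    rw [Finset.prod_range_succ, mul_comm]
    exact (hT k).comp ih

theorem lipschitzWith_backwardTraj (hT : ∀ i, LipschitzWith (K i) (T i)) (k : ℕ) :
    LipschitzWith (∏ i ∈ Finset.range k, K i) (backwardTraj T k) := by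
  induction k with
  | zero => exact LipschitzWith.id
  | succ k ih =>
    rw [Finset.prod_range_succ]
    exact ih.comp (hT k)

end Trajectories

theorem tendsto_dist_of_lipschitzWith {α ι : Type*} [PseudoMetricSpace α] {l : Filter ι}
    {g : ι → α → α} {K : ι → ℝ≥0} (hg : ∀ k, LipschitzWith (K k) (g k))
    (hK : Tendsto (fun k => (K k : ℝ)) l (𝓝 0)) (a b : α) :
    Tendsto (fun k => dist (g k a) (g k b)) l (𝓝 0) :=
  squeeze_zero (fun _ => dist_nonneg) (fun k => (hg k).dist_le_mul a b)
    (by simpa using hK.mul_const (dist a b))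

theorem SFS_trajectories_asymptotically_similar_general
    {X : Type*} [MetricSpace X]
    (n : ℕ → ℕ)
    (f : (i : ℕ) → Fin (n i) → X → X) (L : ℕ → NNReal)
    (hf : ∀ i r, LipschitzWith (L i) (f i r))
    (F : ℕ → NonemptyCompacts X → NonemptyCompacts X)
    (hF : ∀ i (B : NonemptyCompacts X), (F i B : Set X) = ⋃ r, f i r '' (B : Set X))
    (hL : Tendsto (fun k => ∏ i ∈ Finset.range k, (L i : ℝ)) atTop (𝓝 0)) :
    ∀ A B : NonemptyCompacts X,
      Tendsto (fun k => dist (forwardTraj F k A) (forwardTraj F k B)) atTop (𝓝 0) ∧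
      Tendsto (fun k => dist (backwardTraj F k A) (backwardTraj F k B)) atTop (𝓝 0) := by
  have hF_lip : ∀ i, LipschitzWith (L i) (F i) := fun i =>
    NonemptyCompacts.lipschitzWith_of_coe_eq_iUnion_image (hf i) (hF i)
  have hL' : Tendsto (fun k => ((∏ i ∈ Finset.range k, L i : ℝ≥0) : ℝ)) atTop (𝓝 0) := by
    simpa only [NNReal.coe_prod] using hL
  intro A B
  exact ⟨tendsto_dist_of_lipschitzWith (lipschitzWith_forwardTraj hF_lip) hL' A B,
    tendsto_dist_of_lipschitzWith (lipschitzWith_backwardTraj hF_lip) hL' A B⟩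

/-- (Corollary `IFSequiv`, asymptotic similarity of SFS trajectories): for a sequence of
function systems `𝓕ᵢ = {f_{1,i},…,f_{nᵢ,i}}` of Lipschitz maps with Hutchinson operators
`Fᵢ` and contraction factors `Lᵢ` satisfying `∏_{i=1}^k Lᵢ → 0`, all forward SFS
trajectories are asymptotically similar in the Hausdorff metric, and likewise all
backward SFS trajectories. -/
theorem SFS_trajectories_asymptotically_similar
    {X : Type*} [MetricSpace X] [CompleteSpace X]
    (n : ℕ → ℕ) (hn : ∀ i, 0 < n i)
    (f : (i : ℕ) → Fin (n i) → X → X) (L : ℕ → NNReal)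
    (hf : ∀ i r, LipschitzWith (L i) (f i r))
    (F : ℕ → NonemptyCompacts X → NonemptyCompacts X)
    (hF : ∀ i (B : NonemptyCompacts X), (F i B : Set X) = ⋃ r, f i r '' (B : Set X))
    (hL : Tendsto (fun k => ∏ i ∈ Finset.range k, (L i : ℝ)) atTop (𝓝 0)) :
    ∀ A B : NonemptyCompacts X,
      Tendsto (fun k => dist (forwardTraj F k A) (forwardTraj F k B)) atTop (𝓝 0) ∧
      Tendsto (fun k => dist (backwardTraj F k A) (backwardTraj F k B)) atTop (𝓝 0) :=
  SFS_trajectories_asymptotically_similar_general n f L hf F hF hL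
end

section
/- Let (X,d) be a complete metric space, and for each i ∈ ℕ let 𝓕_i = {f_{1,i},…,f_{n,i}} be a family of n Lipschitz maps on X. Let 𝓕 = {f_1,…,f_n} with each f_r Lipschitz and L = max_r Lip(f_r) < 1. Assume there is a compact set C ⊆ X with f_{r,i}(C) ⊆ C for all r, i, and that for each r the sequence {f_{r,i}}_{i∈ℕ} converges uniformly on C to f_r as i → ∞. Then for every nonempty compact A ⊆ C the forward SFS trajectories Φ_k(A) = F_k ∘ F_{k−1} ∘ ⋯ ∘ F_1(A) converge in the Hausdorff metric to the unique attractor of 𝓕, i.e. to the unique nonempty compact set A_𝓕 with ⋃_{r=1}^n f_r(A_𝓕) = A_𝓕, where F_i is the Hutchinson operator of 𝓕_i. -/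
/-!
The limit Hutchinson operator is a contraction of `(H(X), h)` with constant `L`, so it has a
unique fixed point `A_𝓕`. On the sets contained in the invariant set `C`, the operators `F_k`
converge uniformly to it, because the Hausdorff distance between two finite unions of images is
at most the largest distance between corresponding images. Hence `a_k = h(Φ_k(A), A_𝓕)`
satisfies `a_{k+1} ≤ L a_k + δ` for every `δ > 0` and all large `k`, which forces `a_k → 0`.
-/

open Filter Topology TopologicalSpace

open Set Metric

theorem tendsto_zero_of_eventually_le_mul_add {a : ℕ → ℝ} {L : ℝ} (hL₀ : 0 ≤ L)
    (hL₁ : L < 1) (ha : ∀ k, 0 ≤ a k) (h : ∀ δ > 0, ∀ᶠ k in atTop, a (k + 1) ≤ L * a k + δ) :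
    Tendsto a atTop (𝓝 0) := by
  refine tendsto_order.2 ⟨fun b hb => .of_forall fun k => hb.trans_le (ha k), fun ε hε => ?_⟩
  obtain ⟨N, hN⟩ := eventually_atTop.1 (h ((1 - L) * (ε / 2)) (by nlinarith))
  -- `ε / 2` is the fixed point of `x ↦ L * x + (1 - L) * (ε / 2)`, so `a_k - ε / 2` decays
  -- geometrically from index `N` on.
  have hgeom (m : ℕ) : a (N + m) - ε / 2 ≤ L ^ m * (a N - ε / 2) := by
    refine le_geom (u := fun m => a (N + m) - ε / 2) hL₀ m fun k _ => ?_
    have := hN (N + k) le_self_add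
    rw [← add_assoc]
    linarith
  have hpow : Tendsto (fun m => L ^ m * (a N - ε / 2)) atTop (𝓝 0) := by
    simpa using (tendsto_pow_atTop_nhds_zero_of_lt_one hL₀ hL₁).mul_const (a N - ε / 2)
  rw [← map_add_atTop_eq_nat N, eventually_map]
  filter_upwards [hpow.eventually (gt_mem_nhds (half_pos hε))] with m hm
  rw [add_comm]
  linarith [hgeom m]

theorem mapsTo_forwardTraj {α : Type*} {T : ℕ → α → α} {S : Set α}
    (hS : ∀ k, MapsTo (T k) S S) (k : ℕ) : MapsTo (forwardTraj T k) S S := by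
  induction k with
  | zero => exact mapsTo_id S
  | succ k ih => exact (hS k).comp ih

theorem tendsto_forwardTraj_of_tendstoUniformlyOn {Y : Type*} [MetricSpace Y]
    {T : ℕ → Y → Y} {g : Y → Y} {K : NNReal} (hg : ContractingWith K g) {p : Y}
    (hp : g p = p)
    {S : Set Y} (hS : ∀ k, MapsTo (T k) S S) (hu : TendstoUniformlyOn T g atTop S)
    {y : Y} (hy : y ∈ S) : Tendsto (fun k => forwardTraj T k y) atTop (𝓝 p) := by
  refine tendsto_iff_dist_tendsto_zero.2 <| tendsto_zero_of_eventually_le_mul_add K.coe_nonneg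
    (NNReal.coe_lt_one.2 hg.1) (fun _ => dist_nonneg) fun δ hδ => ?_
  filter_upwards [Metric.tendstoUniformlyOn_iff.1 hu δ hδ] with k hk
  set z := forwardTraj T k y
  calc dist (T k z) p ≤ dist (T k z) (g z) + dist (g z) (g p) := by
        rw [hp]; exact dist_triangle _ _ _
    _ ≤ δ + K * dist z p := by
        gcongr
        · exact dist_comm (T k z) (g z) ▸ (hk z (mapsTo_forwardTraj hS k hy)).le
        · exact hg.2.dist_le_mul z p
    _ = K * dist z p + δ := add_comm _ _

section HausdorffEDist

variable {α β : Type*} [PseudoEMetricSpace β]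

theorem hausdorffEDist_image_image_le {g g' : α → β} {s : Set α} {r : ENNReal}
    (h : ∀ x ∈ s, edist (g x) (g' x) ≤ r) : hausdorffEDist (g '' s) (g' '' s) ≤ r := by
  refine hausdorffEDist_le_of_mem_edist ?_ ?_ <;> rintro _ ⟨x, hx, rfl⟩
  · exact ⟨g' x, mem_image_of_mem g' hx, h x hx⟩
  · exact ⟨g x, mem_image_of_mem g hx, edist_comm (g x) (g' x) ▸ h x hx⟩

variable [PseudoEMetricSpace α]

theorem infEDist_image_le_of_lipschitzWith {g : α → β} {K : NNReal} (hg : LipschitzWith K g)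
    {t : Set α} (htc : IsCompact t) (htn : t.Nonempty) (x : α) :
    infEDist (g x) (g '' t) ≤ K * infEDist x t := by
  obtain ⟨y, hyt, hy⟩ := htc.exists_infEDist_eq_edist htn x
  calc infEDist (g x) (g '' t) ≤ edist (g x) (g y) :=
        infEDist_le_edist_of_mem (mem_image_of_mem g hyt)
    _ ≤ K * edist x y := hg.edist_le_mul x y
    _ = K * infEDist x t := by rw [hy]

theorem hausdorffEDist_image_le_of_lipschitzWith {g : α → β} {K : NNReal}
    (hg : LipschitzWith K g) {s t : Set α} (hsc : IsCompact s) (hsn : s.Nonempty)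
    (htc : IsCompact t) (htn : t.Nonempty) :
    hausdorffEDist (g '' s) (g '' t) ≤ K * hausdorffEDist s t := by
  refine hausdorffEDist_le_of_infEDist ?_ ?_ <;> rintro _ ⟨x, hx, rfl⟩
  · exact (infEDist_image_le_of_lipschitzWith hg htc htn x).trans
      (by gcongr; exact infEDist_le_hausdorffEDist_of_mem hx)
  · rw [hausdorffEDist_comm]
    exact (infEDist_image_le_of_lipschitzWith hg hsc hsn x).trans
      (by gcongr; exact infEDist_le_hausdorffEDist_of_mem hx)

end HausdorffEDist

section Hutchinson

variable {X ι : Type*} [Finite ι] [Nonempty ι]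

def hutchinson [TopologicalSpace X] (f : ι → X → X) (hf : ∀ i, Continuous (f i))
    (B : NonemptyCompacts X) : NonemptyCompacts X :=
  ⟨⟨⋃ i, f i '' B, isCompact_iUnion fun i => B.isCompact.image (hf i)⟩,
    nonempty_iUnion.2 ⟨Classical.arbitrary ι, B.nonempty.image _⟩⟩

theorem coe_hutchinson [TopologicalSpace X] (f : ι → X → X) (hf : ∀ i, Continuous (f i))
    (B : NonemptyCompacts X) : (hutchinson f hf B : Set X) = ⋃ i, f i '' B :=
  rfl

variable [EMetricSpace X]

theorem lipschitzWith_hutchinson {f : ι → X → X} {K : NNReal}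
    (hf : ∀ i, LipschitzWith K (f i)) :
    LipschitzWith K (hutchinson f fun i => (hf i).continuous) := fun B B' =>
  hausdorffEDist_iUnion_le.trans <| iSup_le fun i =>
    hausdorffEDist_image_le_of_lipschitzWith (hf i) B.isCompact B.nonempty B'.isCompact
      B'.nonempty

theorem tendstoUniformlyOn_hutchinson {κ : Type*} {l : Filter κ} {f : κ → ι → X → X}
    {g : ι → X → X} (hg : ∀ i, Continuous (g i)) {C : Set X}
    (hu : ∀ i, TendstoUniformlyOn (fun k => f k i) (g i) l C)
    {F : κ → NonemptyCompacts X → NonemptyCompacts X}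
    (hF : ∀ k B, (F k B : Set X) = ⋃ i, f k i '' B) :
    TendstoUniformlyOn F (hutchinson g hg) l {B | (B : Set X) ⊆ C} := by
  refine EMetric.tendstoUniformlyOn_iff.2 fun ε hε => ?_
  obtain ⟨δ, hδ, hδε⟩ := exists_between hε
  filter_upwards [eventually_all.2 fun i => EMetric.tendstoUniformlyOn_iff.1 (hu i) δ hδ]
    with k hk B hB
  refine lt_of_le_of_lt ?_ hδε
  change hausdorffEDist (hutchinson g hg B : Set X) (F k B) ≤ δ
  rw [coe_hutchinson, hF]
  exact hausdorffEDist_iUnion_le.trans <| iSup_le fun i =>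
    hausdorffEDist_image_image_le fun x hx => (hk i x (hB hx)).le

end Hutchinson

theorem forward_SFS_trajectories_converge_to_attractor_general
    {X : Type*} [MetricSpace X] [CompleteSpace X] [Nonempty X]
    {n : ℕ} (hn : 0 < n)
    (f : ℕ → Fin n → X → X)
    (flim : Fin n → X → X) (L : NNReal) (hL : L < 1)
    (hflim : ∀ r, LipschitzWith L (flim r))
    (C : Set X)
    (hinv : ∀ i r, Set.MapsTo (f i r) C C)
    (hu : ∀ r, TendstoUniformlyOn (fun i x => f i r x) (flim r) atTop C)
    (F : ℕ → NonemptyCompacts X → NonemptyCompacts X)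
    (hF : ∀ i (B : NonemptyCompacts X), (F i B : Set X) = ⋃ r, f i r '' (B : Set X)) :
    ∃ Afix : NonemptyCompacts X,
      (⋃ r, flim r '' (Afix : Set X)) = (Afix : Set X) ∧
      (∀ B : NonemptyCompacts X, (⋃ r, flim r '' (B : Set X)) = (B : Set X) → B = Afix) ∧
      ∀ A : NonemptyCompacts X, (A : Set X) ⊆ C →
        Tendsto (fun k => forwardTraj F k A) atTop (𝓝 Afix) := by
  have : Nonempty (Fin n) := Fin.pos_iff_nonempty.1 hn
  have hT : ContractingWith L (hutchinson flim fun r => (hflim r).continuous) :=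
    ⟨hL, lipschitzWith_hutchinson hflim⟩
  have hfix := hT.fixedPoint_isFixedPt
  have hFC : ∀ k, MapsTo (F k) {B | (B : Set X) ⊆ C} {B | (B : Set X) ⊆ C} := fun k B hB => by
    rw [mem_ofPred_eq, hF]
    exact iUnion_subset fun r => ((hinv k r).mono_left hB).image_subset
  exact ⟨_, congrArg SetLike.coe hfix, fun B hB => hT.fixedPoint_unique (NonemptyCompacts.ext hB),
    fun A hA => tendsto_forwardTraj_of_tendstoUniformlyOn hT hfix hFC
      (tendstoUniformlyOn_hutchinson _ hu hF) hA⟩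

/-- (Corollary `SFSforward`, convergence of forward SFS trajectories): for a sequence of
function systems `𝓕ᵢ = {f_{1,i},…,f_{n,i}}` of Lipschitz maps with a compact invariant
set `C`, converging uniformly on `C` to a contractive system `𝓕 = {f₁,…,fₙ}` with
contraction factor `L < 1`, the forward SFS trajectories converge from any nonempty
compact initial set `A ⊆ C` to the unique attractor of `𝓕`. -/
theorem forward_SFS_trajectories_converge_to_attractor
    {X : Type*} [MetricSpace X] [CompleteSpace X] [Nonempty X]
    {n : ℕ} (hn : 0 < n)
    (f : ℕ → Fin n → X → X)
    (hf : ∀ i r, ∃ K : NNReal, LipschitzWith K (f i r))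
    (flim : Fin n → X → X) (L : NNReal) (hL : L < 1)
    (hflim : ∀ r, LipschitzWith L (flim r))
    (C : Set X) (hCc : IsCompact C)
    (hinv : ∀ i r, Set.MapsTo (f i r) C C)
    (hu : ∀ r, TendstoUniformlyOn (fun i x => f i r x) (flim r) atTop C)
    (F : ℕ → NonemptyCompacts X → NonemptyCompacts X)
    (hF : ∀ i (B : NonemptyCompacts X), (F i B : Set X) = ⋃ r, f i r '' (B : Set X)) :
    ∃ Afix : NonemptyCompacts X,
      (⋃ r, flim r '' (Afix : Set X)) = (Afix : Set X) ∧
      (∀ B : NonemptyCompacts X, (⋃ r, flim r '' (B : Set X)) = (B : Set X) → B = Afix) ∧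
      ∀ A : NonemptyCompacts X, (A : Set X) ⊆ C →
        Tendsto (fun k => forwardTraj F k A) atTop (𝓝 Afix) :=
  forward_SFS_trajectories_converge_to_attractor_general hn f flim L hL hflim C hinv hu F hF
end
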